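/- Let t ≥ 1 and b ≥ 1 be integers and let x1 and x2 be binary words of length n with w(x1) = w(x2) + b. Set N = Σ_{i=b}^{t} min{ C(w(x1), i)·C(n−w(x1), t−i), C(w(x1)−b, i−b)·C(n−w(x1)+b, t+b−i) }. Then: (1) for any sets D1 and D2 of deletion vectors for length-n words, each vector of weight exactly t, with |D1| = |D2|, whose output multiset on x1 equals the output multiset on x2, one has |D1| ≤ N; and (2) for the particular pair x1 = 1^{w(x1)} 0^{n−w(x1)} and x2 = 1^{w(x1)−b} 0^{n+b−w(x1)}, there exist such sets D1 and D2 with |D1| = |D2| = N, so the bound N is attained. -/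

import Mathlib

/-- Applying a deletion vector `S` (a set of coordinate positions) to a word
`x` of length `n`: delete the entries at positions in `S`, keeping the rest in order. -/
def delWord {q n : ℕ} (x : Fin n → Fin q) (S : Finset (Fin n)) : List (Fin q) :=
  ((Finset.univ \ S).sort (· ≤ ·)).map x

/-- Weight of a binary word: the number of entries equal to `1`. -/
def wt {n : ℕ} (x : Fin n → Fin 2) : ℕ := (Finset.univ.filter fun i => x i = 1).card

/-!
Deleting `S` from `x` leaves a word of weight `wt x - #(S ∩ ones x)`. Equal output multisets
therefore force, for every `i`, as many vectors of `D1` deleting `i` ones of `x1` as vectors of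
`D2` deleting `i - b` ones of `x2`. Both counts are bounded by the number of weight-`t` vectors
of that kind, a product of two binomials, and summing over `i` gives `N`. For sorted words such
as `1^w 0^(n-w)` every output is again sorted, hence determined by its length and weight, so
taking equally many vectors of each kind on both sides yields equal output multisets.
-/

open Finset

lemma card_filter_powersetCard_card_inter_eq {α : Type*} [DecidableEq α] {s A : Finset α}
    (hA : A ⊆ s) {t i : ℕ} (hi : i ≤ t) :
    #{S ∈ s.powersetCard t | #(S ∩ A) = i} = (#A).choose i * (#s - #A).choose (t - i) := by
  rw [← card_sdiff_of_subset hA, ← card_powersetCard, ← card_powersetCard, ← card_product]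
  refine card_bij' (fun S _ => (S ∩ A, S \ A)) (fun p _ => p.1 ∪ p.2) ?_ ?_ ?_ ?_
  · intro S hS
    simp only [mem_filter, mem_powersetCard, mem_product] at hS ⊢
    refine ⟨⟨inter_subset_right, hS.2⟩, sdiff_subset_sdiff hS.1.1 subset_rfl, ?_⟩
    have := card_sdiff_add_card_inter S A
    omega
  · intro p hp
    simp only [mem_filter, mem_powersetCard, mem_product] at hp ⊢
    have hdisj : Disjoint p.1 p.2 := disjoint_sdiff.mono hp.1.1 hp.2.1
    have hp1 : (p.1 ∪ p.2) ∩ A = p.1 := by grind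
    refine ⟨⟨union_subset (hp.1.1.trans hA) (hp.2.1.trans sdiff_subset), ?_⟩, by rw [hp1, hp.1.2]⟩
    rw [card_union_of_disjoint hdisj]
    omega
  · intro S _
    exact sup_inf_sdiff S A
  · intro p hp
    simp only [mem_powersetCard, mem_product, subset_iff, mem_sdiff] at hp
    ext x <;> simp only [mem_inter, mem_union, mem_sdiff] <;> grind

lemma Multiset.map_eq_map_of_card_eq {α β γ : Type*} {s : Multiset α} {u : Multiset β}
    {f : α → γ} {g : β → γ} (hcard : card s = card u) (h : ∀ a ∈ s, ∀ b ∈ u, f a = g b) :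
    s.map f = u.map g := by
  rcases empty_or_exists_mem s with rfl | ⟨a, ha⟩
  · rw [card_eq_zero.1 hcard.symm, map_zero, map_zero]
  · obtain ⟨b, hb⟩ := card_pos_iff_exists_mem.1 (hcard ▸ card_pos_iff_exists_mem.2 ⟨a, ha⟩)
    rw [map_congr rfl fun a' ha' => (h a' ha' b hb).trans (h a ha b hb).symm,
      map_congr rfl fun b' hb' => (h a ha b' hb').symm, map_const', map_const', hcard]

lemma List.eq_of_sortedGE_of_count_one_eq {L L' : List (Fin 2)} (hL : L.SortedGE)
    (hL' : L'.SortedGE) (hlen : L.length = L'.length) (hc : L.count 1 = L'.count 1) : L = L' := by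
  have count_zero_add_count_one : ∀ M : List (Fin 2), M.count 0 + M.count 1 = M.length := by
    intro M
    induction M with
    | nil => rfl
    | cons a M ih => fin_cases a <;> simp <;> omega
  refine List.Perm.eq_of_sortedGE hL hL' (List.perm_iff_count.2 fun a => ?_)
  fin_cases a
  · have := count_zero_add_count_one L
    have := count_zero_add_count_one L'
    simp only [Fin.zero_eta, Fin.isValue]
    omega
  · exact hc

def ones {n : ℕ} (x : Fin n → Fin 2) : Finset (Fin n) := {i | x i = 1}

lemma wt_eq_card_ones {n : ℕ} (x : Fin n → Fin 2) : wt x = #(ones x) := rfl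

lemma wt_le {n : ℕ} (x : Fin n → Fin 2) : wt x ≤ n :=
  (card_le_univ (ones x)).trans_eq (Fintype.card_fin n)

lemma length_delWord {q n : ℕ} (x : Fin n → Fin q) (S : Finset (Fin n)) :
    (delWord x S).length = n - #S := by
  simp [delWord, ← compl_eq_univ_sdiff, card_compl]

lemma count_one_delWord_add {n : ℕ} (x : Fin n → Fin 2) (S : Finset (Fin n)) :
    (delWord x S).count 1 + #(S ∩ ones x) = wt x := by
  have : (delWord x S).count 1 = #(ones x \ S) := by
    rw [← Multiset.coe_count, delWord, ← Multiset.map_coe, sort_eq, Multiset.count_map,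
      ← filter_val, ← card_val]
    congr 2
    ext i
    simp [ones, eq_comm, and_comm]
  rw [this, inter_comm, card_sdiff_add_card_inter, wt_eq_card_ones]

lemma sortedGE_delWord {q n : ℕ} {x : Fin n → Fin q} (hx : Antitone x) (S : Finset (Fin n)) :
    (delWord x S).SortedGE :=
  List.Pairwise.sortedGE ((pairwise_sort _ _).map x fun _ _ h => hx h)

lemma delWord_eq_of_antitone {n : ℕ} {x1 x2 : Fin n → Fin 2} (hx1 : Antitone x1)
    (hx2 : Antitone x2) {S1 S2 : Finset (Fin n)} (hS : #S1 = #S2)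
    (hones : wt x1 + #(S2 ∩ ones x2) = wt x2 + #(S1 ∩ ones x1)) :
    delWord x1 S1 = delWord x2 S2 := by
  refine List.eq_of_sortedGE_of_count_one_eq (sortedGE_delWord hx1 S1) (sortedGE_delWord hx2 S2)
    (by rw [length_delWord, length_delWord, hS]) ?_
  have := count_one_delWord_add x1 S1
  have := count_one_delWord_add x2 S2
  omega

def deletionClass {n : ℕ} (x : Fin n → Fin 2) (t i : ℕ) : Finset (Finset (Fin n)) :=
  {S ∈ univ.powersetCard t | #(S ∩ ones x) = i}

lemma mem_deletionClass {n t i : ℕ} {x : Fin n → Fin 2} {S : Finset (Fin n)} :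
    S ∈ deletionClass x t i ↔ #S = t ∧ #(S ∩ ones x) = i := by
  simp [deletionClass]

lemma card_deletionClass {n t i : ℕ} (x : Fin n → Fin 2) (hi : i ≤ t) :
    #(deletionClass x t i) = (wt x).choose i * (n - wt x).choose (t - i) := by
  rw [deletionClass, card_filter_powersetCard_card_inter_eq (subset_univ _) hi, card_univ,
    Fintype.card_fin, wt_eq_card_ones]

lemma disjoint_deletionClass {n t i j : ℕ} (x : Fin n → Fin 2) (hij : i ≠ j) :
    Disjoint (deletionClass x t i) (deletionClass x t j) :=
  disjoint_filter.2 fun _ _ hi hj => hij (hi.symm.trans hj)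

lemma card_filter_card_inter_ones_le {n t i : ℕ} (x : Fin n → Fin 2) {D : Finset (Finset (Fin n))}
    (hD : ∀ S ∈ D, #S = t) (hi : i ≤ t) :
    #{S ∈ D | #(S ∩ ones x) = i} ≤ (wt x).choose i * (n - wt x).choose (t - i) := by
  rw [← card_deletionClass x hi]
  refine card_le_card fun S hS => ?_
  rw [mem_filter] at hS
  exact mem_deletionClass.2 ⟨hD S hS.1, hS.2⟩

lemma card_filter_card_inter_ones_eq_of_map_delWord_eq {n b : ℕ} {x1 x2 : Fin n → Fin 2}
    (hw : wt x1 = wt x2 + b) {D1 D2 : Finset (Finset (Fin n))}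
    (h : D1.val.map (delWord x1) = D2.val.map (delWord x2)) (i : ℕ) :
    #{S ∈ D1 | #(S ∩ ones x1) = i} = #{S ∈ D2 | #(S ∩ ones x2) + b = i} := by
  have hcount := congrArg (Multiset.countP fun L => L.count 1 + i = wt x1) h
  rw [Multiset.countP_map, Multiset.countP_map] at hcount
  rw [filter_congr fun S _ => show #(S ∩ ones x1) = i ↔ (delWord x1 S).count 1 + i = wt x1 by
      have := count_one_delWord_add x1 S; omega,
    filter_congr fun S _ => show #(S ∩ ones x2) + b = i ↔ (delWord x2 S).count 1 + i = wt x1 by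
      have := count_one_delWord_add x2 S; omega]
  exact hcount

def deletionBound (n t b w : ℕ) : ℕ :=
  ∑ i ∈ Icc b t, min (w.choose i * (n - w).choose (t - i))
    ((w - b).choose (i - b) * (n - w + b).choose (t + b - i))

theorem card_le_deletionBound {n t b : ℕ} {x1 x2 : Fin n → Fin 2} (hw : wt x1 = wt x2 + b)
    {D1 D2 : Finset (Finset (Fin n))} (hD1 : ∀ S ∈ D1, #S = t) (hD2 : ∀ S ∈ D2, #S = t)
    (h : D1.val.map (delWord x1) = D2.val.map (delWord x2)) :
    #D1 ≤ deletionBound n t b (wt x1) := by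
  have hfiber := card_filter_card_inter_ones_eq_of_map_delWord_eq hw h
  have hmaps : (D1 : Set (Finset (Fin n))).MapsTo (fun S => #(S ∩ ones x1)) (Icc b t) := by
    intro S hS
    obtain ⟨S', hS'⟩ : {S' ∈ D2 | #(S' ∩ ones x2) + b = #(S ∩ ones x1)}.Nonempty := by
      rw [← card_pos, ← hfiber]
      exact card_pos.2 ⟨S, mem_filter.2 ⟨hS, rfl⟩⟩
    have hle : #(S ∩ ones x1) ≤ t := hD1 S hS ▸ card_le_card inter_subset_left
    simp only [mem_filter] at hS'
    simp only [coe_Icc, Set.mem_Icc]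
    omega
  rw [card_eq_sum_card_fiberwise hmaps, deletionBound]
  refine sum_le_sum fun i hi => le_min (card_filter_card_inter_ones_le x1 hD1 (mem_Icc.1 hi).2) ?_
  obtain ⟨hbi, hit⟩ := mem_Icc.1 hi
  have hwn := wt_le x1
  calc #{S ∈ D1 | #(S ∩ ones x1) = i} = #{S ∈ D2 | #(S ∩ ones x2) = i - b} := by
        rw [hfiber]; congr 1; exact filter_congr fun S _ => by omega
    _ ≤ (wt x2).choose (i - b) * (n - wt x2).choose (t - (i - b)) :=
        card_filter_card_inter_ones_le x2 hD2 (by omega)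
    _ = (wt x1 - b).choose (i - b) * (n - wt x1 + b).choose (t + b - i) := by
        rw [show wt x2 = wt x1 - b by omega, show n - (wt x1 - b) = n - wt x1 + b by omega,
          show t - (i - b) = t + b - i by omega]

def stepWord (n a : ℕ) : Fin n → Fin 2 := fun i => if (i : ℕ) < a then 1 else 0

lemma antitone_stepWord (n a : ℕ) : Antitone (stepWord n a) := by
  intro i j hij
  simp only [stepWord]
  split_ifs <;> omega

lemma wt_stepWord {n a : ℕ} (ha : a ≤ n) : wt (stepWord n a) = a := by
  have hcard : #{i : Fin n | (i : ℕ) < a} = a := by rw [Fin.card_filter_val_lt, min_eq_right ha]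
  rw [wt]
  convert hcard using 2
  ext i
  simp [stepWord]

theorem exists_card_eq_deletionBound_of_antitone {n t b : ℕ} {x1 x2 : Fin n → Fin 2}
    (hx1 : Antitone x1) (hx2 : Antitone x2) (hw : wt x1 = wt x2 + b) :
    ∃ D1 D2 : Finset (Finset (Fin n)), (∀ S ∈ D1, #S = t) ∧ (∀ S ∈ D2, #S = t) ∧
      #D1 = deletionBound n t b (wt x1) ∧ #D2 = deletionBound n t b (wt x1) ∧
      D1.val.map (delWord x1) = D2.val.map (delWord x2) := by
  set m : ℕ → ℕ := fun i => min ((wt x1).choose i * (n - wt x1).choose (t - i))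
    ((wt x1 - b).choose (i - b) * (n - wt x1 + b).choose (t + b - i))
  have hwn := wt_le x1
  have hm : ∀ i ∈ Icc b t,
      m i ≤ #(deletionClass x1 t i) ∧ m i ≤ #(deletionClass x2 t (i - b)) := by
    intro i hi
    obtain ⟨hbi, hit⟩ := mem_Icc.1 hi
    rw [card_deletionClass x1 hit, card_deletionClass x2 (by omega),
      show wt x2 = wt x1 - b by omega, show n - (wt x1 - b) = n - wt x1 + b by omega,
      show t - (i - b) = t + b - i by omega]
    exact ⟨min_le_left _ _, min_le_right _ _⟩
  choose F1 hF1 hcard1 using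
    fun i => exists_subset_card_eq (min_le_right (m i) #(deletionClass x1 t i))
  choose F2 hF2 hcard2 using
    fun i => exists_subset_card_eq (min_le_right (m i) #(deletionClass x2 t (i - b)))
  have hdisj1 : (Icc b t : Set ℕ).PairwiseDisjoint F1 := fun i _ j _ hij =>
    (disjoint_deletionClass x1 hij).mono (hF1 i) (hF1 j)
  have hdisj2 : (Icc b t : Set ℕ).PairwiseDisjoint F2 := fun i hi j hj hij =>
    (disjoint_deletionClass x2 (by simp only [coe_Icc, Set.mem_Icc] at hi hj; omega)).mono
      (hF2 i) (hF2 j)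
  refine ⟨(Icc b t).disjiUnion F1 hdisj1, (Icc b t).disjiUnion F2 hdisj2, ?_, ?_, ?_, ?_, ?_⟩
  · simp only [mem_disjiUnion]
    rintro S ⟨i, -, hS⟩
    exact (mem_deletionClass.1 (hF1 i hS)).1
  · simp only [mem_disjiUnion]
    rintro S ⟨i, -, hS⟩
    exact (mem_deletionClass.1 (hF2 i hS)).1
  · rw [card_disjiUnion]
    exact sum_congr rfl fun i hi => (hcard1 i).trans (min_eq_left (hm i hi).1)
  · rw [card_disjiUnion]
    exact sum_congr rfl fun i hi => (hcard2 i).trans (min_eq_left (hm i hi).2)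
  · rw [disjiUnion_val, disjiUnion_val, Multiset.map_bind, Multiset.map_bind]
    refine Multiset.bind_congr fun i (hi : i ∈ Icc b t) =>
      Multiset.map_eq_map_of_card_eq ?_ fun S1 h1 S2 h2 => ?_
    · rw [card_val, card_val, hcard1, hcard2, min_eq_left (hm i hi).1, min_eq_left (hm i hi).2]
    · obtain ⟨hS1, hi1⟩ := mem_deletionClass.1 (hF1 i h1)
      obtain ⟨hS2, hi2⟩ := mem_deletionClass.1 (hF2 i h2)
      have hbi := (mem_Icc.1 hi).1
      exact delWord_eq_of_antitone hx1 hx2 (hS1.trans hS2.symm) (by omega)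

theorem multiset_model_weight_difference_bound_general
    (t b n : ℕ)
    (x1 x2 : Fin n → Fin 2) (hw : wt x1 = wt x2 + b) :
    let N := ∑ i ∈ Finset.Icc b t,
      min ((wt x1).choose i * (n - wt x1).choose (t - i))
          ((wt x1 - b).choose (i - b) * (n - wt x1 + b).choose (t + b - i))
    (∀ D1 D2 : Finset (Finset (Fin n)),
      (∀ S ∈ D1, S.card = t) → (∀ S ∈ D2, S.card = t) →
      D1.card = D2.card →
      Multiset.map (delWord x1) D1.val = Multiset.map (delWord x2) D2.val →
      D1.card ≤ N) ∧
    (∃ D1 D2 : Finset (Finset (Fin n)),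
      (∀ S ∈ D1, S.card = t) ∧ (∀ S ∈ D2, S.card = t) ∧
      D1.card = N ∧ D2.card = N ∧
      Multiset.map (delWord (fun i : Fin n => if (i : ℕ) < wt x1 then (1 : Fin 2) else 0)) D1.val =
        Multiset.map (delWord (fun i : Fin n => if (i : ℕ) < wt x1 - b then (1 : Fin 2) else 0))
          D2.val) := by
  refine ⟨fun D1 D2 hD1 hD2 _ h => card_le_deletionBound hw hD1 hD2 h, ?_⟩
  have hwn := wt_le x1
  have hstep : wt (stepWord n (wt x1)) = wt (stepWord n (wt x1 - b)) + b := by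
    rw [wt_stepWord hwn, wt_stepWord (by omega)]
    omega
  have := exists_card_eq_deletionBound_of_antitone (t := t) (antitone_stepWord n (wt x1))
    (antitone_stepWord n (wt x1 - b)) hstep
  rwa [wt_stepWord hwn] at this

/-- If `w(x1) = w(x2) + b` with `b ≥ 1`, then any pair of sets of deletion vectors of weight
exactly `t` with equal output multisets on `x1` and `x2` has size at most
`N = ∑_{i=b}^{t} min(C(w(x1),i)·C(n-w(x1),t-i), C(w(x1)-b,i-b)·C(n-w(x1)+b,t+b-i))`,
and this bound is attained by the pair `1^{w(x1)} 0^{n-w(x1)}`, `1^{w(x1)-b} 0^{n+b-w(x1)}`. -/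
theorem multiset_model_weight_difference_bound
    (t b n : ℕ) (ht : 1 ≤ t) (hb : 1 ≤ b)
    (x1 x2 : Fin n → Fin 2) (hw : wt x1 = wt x2 + b) :
    let N := ∑ i ∈ Finset.Icc b t,
      min ((wt x1).choose i * (n - wt x1).choose (t - i))
          ((wt x1 - b).choose (i - b) * (n - wt x1 + b).choose (t + b - i))
    (∀ D1 D2 : Finset (Finset (Fin n)),
      (∀ S ∈ D1, S.card = t) → (∀ S ∈ D2, S.card = t) →
      D1.card = D2.card →
      Multiset.map (delWord x1) D1.val = Multiset.map (delWord x2) D2.val →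
      D1.card ≤ N) ∧
    (∃ D1 D2 : Finset (Finset (Fin n)),
      (∀ S ∈ D1, S.card = t) ∧ (∀ S ∈ D2, S.card = t) ∧
      D1.card = N ∧ D2.card = N ∧
      Multiset.map (delWord (fun i : Fin n => if (i : ℕ) < wt x1 then (1 : Fin 2) else 0)) D1.val =
        Multiset.map (delWord (fun i : Fin n => if (i : ℕ) < wt x1 - b then (1 : Fin 2) else 0))
          D2.val) :=
  multiset_model_weight_difference_bound_general t b n x1 x2 hw
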